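/- Let α > 0 and suppose there exists y₁ ∈ (0, R_α) with v(α, y₁) = 1 and v(α, r) < 1 for all r ∈ (0, y₁). Then ∂_r v(α, r) > 0 for all r ∈ [y₁, R_α). -/

import Mathlib

/-!
Let `z ≥ y₁` be the first point with `v' z ≤ 0`. Since `v' > 0` on `[y₁, z)`, `v z ≥ v y₁ = 1`.
At a critical point with `v ≥ 1` the equation gives `v''/2 = n² v / (2 sinh² r) + v (v² - 1) > 0`,
so in either case `v' < 0` just to the left of `z`. If `z > y₁` this contradicts `v' > 0` on
`(y₁, z)`; if `z = y₁` it makes `v > 1` just to the left of `y₁`, contradicting `v < 1` there.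
-/

open Filter Set Topology

/-- The degree-`n` vortex equation at a point `r`:
`(1/2)·u'' + (1/2)·coth(r)·u' − (n²/(2·sinh²(r)))·u + u − u³ = 0`. -/
def VortexEqAt (n : ℝ) (u : ℝ → ℝ) (r : ℝ) : Prop :=
  (1/2) * deriv (deriv u) r + (1/2) * (Real.cosh r / Real.sinh r) * deriv u r
    - n ^ 2 / (2 * Real.sinh r ^ 2) * u r + u r - u r ^ 3 = 0

/-- `u` is a (C²) solution of the degree-`n` vortex equation on the set `s`. -/
def IsVortexSolOn (n : ℝ) (u : ℝ → ℝ) (s : Set ℝ) : Prop :=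
  ContDiffOn ℝ 2 u s ∧ ∀ r ∈ s, VortexEqAt n u r

/-- The interval `(0, R)` for an extended-real right endpoint `R`. -/
def MaxDom (R : EReal) : Set ℝ := {r : ℝ | 0 < r ∧ (r : EReal) < R}

/-- `u` is the maximal solution of the degree-`n` vortex equation on `(0, R)` with
`u(r)/rⁿ → α` as `r → 0⁺`: it solves the equation, has the prescribed behaviour at the
origin, every solution with the same behaviour at the origin is defined at most up to `R`
and agrees with `u`, and either `R = ∞` or `u` blows up at `R⁻`. -/
def IsMaximalVortexSol (n α : ℝ) (u : ℝ → ℝ) (R : EReal) : Prop :=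
  0 < R ∧
  IsVortexSolOn n u (MaxDom R) ∧
  Tendsto (fun r => u r / r ^ n) (nhdsWithin 0 (Set.Ioi 0)) (nhds α) ∧
  (∀ b : ℝ, 0 < b → ∀ w : ℝ → ℝ, IsVortexSolOn n w (Set.Ioo 0 b) →
    Tendsto (fun r => w r / r ^ n) (nhdsWithin 0 (Set.Ioi 0)) (nhds α) →
    (b : EReal) ≤ R ∧ Set.EqOn w u (Set.Ioo 0 b)) ∧
  (R = ⊤ ∨ ∃ Rr : ℝ, R = (Rr : EReal) ∧
    Tendsto u (nhdsWithin Rr (Set.Iio Rr)) atTop)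

lemma isOpen_maxDom (R : EReal) : IsOpen (MaxDom R) := by
  have : MaxDom R = Real.toEReal ⁻¹' Ioo 0 R := by
    ext r
    simp [MaxDom]
  rw [this]
  exact isOpen_Ioo.preimage continuous_coe_real_ereal

lemma ordConnected_maxDom (R : EReal) : (MaxDom R).OrdConnected :=
  ⟨fun _ hx _ hy _ ht => ⟨hx.1.trans_le ht.1, (EReal.coe_le_coe_iff.2 ht.2).trans_lt hy.2⟩⟩

lemma VortexEqAt.deriv_deriv_pos {n : ℝ} {u : ℝ → ℝ} {r : ℝ} (h : VortexEqAt n u r)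
    (hn : n ≠ 0) (hr : 0 < r) (hcrit : deriv u r = 0) (hu : 1 ≤ u r) :
    0 < deriv (deriv u) r := by
  rw [VortexEqAt, hcrit] at h
  have hpot : 0 < n ^ 2 / (2 * Real.sinh r ^ 2) * u r := by
    have := Real.sinh_pos_iff.2 hr
    positivity
  have hcubic : 0 ≤ u r * (u r - 1) * (u r + 1) := by
    have : 0 ≤ u r - 1 := sub_nonneg.2 hu
    have : 0 ≤ u r + 1 := by linarith
    have : 0 ≤ u r := by linarith
    positivity
  nlinarith

lemma eventually_nhdsLT_lt_of_deriv_neg {f : ℝ → ℝ} {z : ℝ}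
    (hf : ∀ᶠ y in 𝓝 z, DifferentiableAt ℝ f y) (hd : ∀ᶠ y in 𝓝[<] z, deriv f y < 0) :
    ∀ᶠ y in 𝓝[<] z, f z < f y := by
  obtain ⟨c, hcz, hc⟩ := mem_nhdsLT_iff_exists_Ioo_subset.1
    ((hf.filter_mono nhdsWithin_le_nhds).and hd)
  have hanti : StrictAntiOn f (Ioc c z) := by
    refine strictAntiOn_of_deriv_neg (convex_Ioc c z) (fun y hy => ?_) fun y hy => ?_
    · rcases hy.2.eq_or_lt with rfl | hyz
      · exact hf.self_of_nhds.continuousAt.continuousWithinAt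
      · exact (hc ⟨hy.1, hyz⟩).1.continuousAt.continuousWithinAt
    · rw [interior_Ioc] at hy
      exact (hc hy).2
  filter_upwards [Ioo_mem_nhdsLT hcz] with y hy
  exact hanti ⟨hy.1, hy.2.le⟩ ⟨hcz, le_rfl⟩ hy.2

lemma ContinuousOn.exists_first_nonpos {g : ℝ → ℝ} {a b : ℝ} (hg : ContinuousOn g (Icc a b))
    (hab : a ≤ b) (hb : g b ≤ 0) :
    ∃ z ∈ Icc a b, g z ≤ 0 ∧ ∀ t ∈ Ico a z, 0 < g t := by
  have hS : IsCompact (Icc a b ∩ g ⁻¹' Iic 0) :=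
    isCompact_Icc.of_isClosed_subset (hg.preimage_isClosed_of_isClosed isClosed_Icc isClosed_Iic)
      inter_subset_left
  obtain ⟨z, ⟨hzI, hz⟩, hleast⟩ := hS.exists_isLeast ⟨b, ⟨⟨hab, le_rfl⟩, hb⟩⟩
  refine ⟨z, hzI, hz, fun t ht => not_le.1 fun htg => ?_⟩
  exact (hleast ⟨⟨ht.1, ht.2.le.trans hzI.2⟩, htg⟩).not_gt ht.2

section Crossing

variable {u : ℝ → ℝ} {s : Set ℝ} {c : ℝ}

lemma eventually_nhdsLT_deriv_neg_of_deriv_nonpos (hs : IsOpen s) (hu : ContDiffOn ℝ 2 u s)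
    (hmin : ∀ z ∈ s, deriv u z = 0 → c ≤ u z → 0 < deriv (deriv u) z)
    {z : ℝ} (hz : z ∈ s) (hdz : deriv u z ≤ 0) (huz : c ≤ u z) :
    ∀ᶠ y in 𝓝[<] z, deriv u y < 0 := by
  rcases hdz.lt_or_eq with hneg | hcrit
  · exact nhdsWithin_le_nhds <|
      ((hu.continuousOn_deriv_of_isOpen hs (by norm_num)).continuousAt
        (hs.mem_nhds hz)).eventually_lt continuousAt_const hneg
  · exact deriv_neg_left_of_sign_deriv <| nhdsWithin_le_nhds <|
      eventually_nhdsWithin_sign_eq_of_deriv_pos (hmin z hz hcrit huz) hcrit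

theorem deriv_pos_after_upcrossing (hs : IsOpen s) (hs' : s.OrdConnected)
    (hu : ContDiffOn ℝ 2 u s)
    (hmin : ∀ z ∈ s, deriv u z = 0 → c ≤ u z → 0 < deriv (deriv u) z)
    {y₁ : ℝ} (hy₁ : y₁ ∈ s) (huy₁ : u y₁ = c) (hbelow : ∀ᶠ y in 𝓝[<] y₁, u y < c)
    {r : ℝ} (hr : r ∈ s) (hy₁r : y₁ ≤ r) : 0 < deriv u r := by
  by_contra! hdr
  have hdiffOn : DifferentiableOn ℝ u s := hu.differentiableOn (by norm_num)
  have hIcc : Icc y₁ r ⊆ s := hs'.out hy₁ hr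
  obtain ⟨z, hzI, hdz, hpos⟩ := ((hu.continuousOn_deriv_of_isOpen hs (by norm_num)).mono
    hIcc).exists_first_nonpos hy₁r hdr
  have hzs : z ∈ s := hIcc hzI
  have huz : c ≤ u z := by
    have hIcc' : Icc y₁ z ⊆ s := hs'.out hy₁ hzs
    have hmono : MonotoneOn u (Icc y₁ z) := by
      refine monotoneOn_of_deriv_nonneg (convex_Icc y₁ z) (hdiffOn.mono hIcc').continuousOn
        (hdiffOn.mono (interior_subset.trans hIcc')) fun x hx => ?_
      rw [interior_Icc] at hx
      exact (hpos x ⟨hx.1.le, hx.2⟩).le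
    rw [← huy₁]
    exact hmono ⟨le_rfl, hzI.1⟩ ⟨hzI.1, le_rfl⟩ hzI.1
  have hleft := eventually_nhdsLT_deriv_neg_of_deriv_nonpos hs hu hmin hzs hdz huz
  rcases hzI.1.eq_or_lt with rfl | hy₁z
  · have hdiff : ∀ᶠ x in 𝓝 y₁, DifferentiableAt ℝ u x :=
      (hs.eventually_mem hy₁).mono fun x hx => hdiffOn.differentiableAt (hs.mem_nhds hx)
    obtain ⟨y, hy, hy'⟩ := ((eventually_nhdsLT_lt_of_deriv_neg hdiff hleft).and hbelow).exists
    linarith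
  · obtain ⟨y, hy, hy'⟩ := (hleft.and (Ioo_mem_nhdsLT hy₁z)).exists
    exact (hpos y ⟨hy'.1.le, hy'.2⟩).not_gt hy

end Crossing

/-- **Once the shooting solution reaches the value `1`, it keeps increasing.** -/
theorem increasing_after_one (n : ℝ) (hn : 0 < n)
    (v : ℝ → ℝ → ℝ) (R : ℝ → EReal)
    (hfam : ∀ α : ℝ, 0 ≤ α → IsMaximalVortexSol n α (v α) (R α))
    (α : ℝ) (hα : 0 < α)
    (y₁ : ℝ) (hy₁ : y₁ ∈ MaxDom (R α))
    (hv1 : v α y₁ = 1)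
    (hlt : ∀ r ∈ Set.Ioo (0 : ℝ) y₁, v α r < 1) :
    ∀ r : ℝ, y₁ ≤ r → (r : EReal) < R α → 0 < deriv (v α) r := by
  obtain ⟨-, ⟨hC2, hODE⟩, -⟩ := hfam α hα.le
  intro r hy₁r hrR
  refine deriv_pos_after_upcrossing (isOpen_maxDom _) (ordConnected_maxDom _) hC2
    (fun z hz => (hODE z hz).deriv_deriv_pos hn.ne' hz.1) hy₁ hv1 ?_
    ⟨hy₁.1.trans_le hy₁r, hrR⟩ hy₁r
  filter_upwards [Ioo_mem_nhdsLT hy₁.1] using hlt
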